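/- arXiv:2604.17461 — 6 statements merged into one kernel-verified Lean document; each statement's English description precedes it below -/
import Mathlib

section
/- Let γ be a real number with 0 < γ ≤ 1/16, and let λ₁, λ₂, λ₃ be natural numbers with λ₁ ≥ λ₃ + 1 and λ₂ ≥ λ₃ + 1. Let x_i, x_j, x_k, x_l be real numbers such that |x_i − x_j| ≤ γ^{λ₁}, |x_k − x_l| ≤ γ^{λ₂}, and each of |x_i − x_k|, |x_i − x_l|, |x_j − x_k|, |x_j − x_l| is at least (1 − 2γ)·γ^{λ₃}. Then ((x_i − x_k)(x_i − x_l)(x_j − x_k)(x_j − x_l))² − ((x_i − x_j)(x_k − x_l))⁴ > 0. -/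
/-- Case (a) of the quartet-sign polynomial lemma: if `|xᵢ − xⱼ| ≤ γ^λ₁`,
`|x_k − x_l| ≤ γ^λ₂` with `λ₁, λ₂ ≥ λ₃ + 1`, and all four cross distances are at
least `(1 − 2γ)·γ^λ₃`, then the detection polynomial is positive. -/
theorem quartet_poly_pos_disjoint_case
    (γ : ℝ) (hγ0 : 0 < γ) (hγ : γ ≤ 1 / 16)
    (lam1 lam2 lam3 : ℕ) (h1 : lam3 + 1 ≤ lam1) (h2 : lam3 + 1 ≤ lam2)
    (xi xj xk xl : ℝ)
    (hij : |xi - xj| ≤ γ ^ lam1)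
    (hkl : |xk - xl| ≤ γ ^ lam2)
    (hik : (1 - 2 * γ) * γ ^ lam3 ≤ |xi - xk|)
    (hil : (1 - 2 * γ) * γ ^ lam3 ≤ |xi - xl|)
    (hjk : (1 - 2 * γ) * γ ^ lam3 ≤ |xj - xk|)
    (hjl : (1 - 2 * γ) * γ ^ lam3 ≤ |xj - xl|) :
    ((xi - xk) * (xi - xl) * (xj - xk) * (xj - xl)) ^ 2
      - ((xi - xj) * (xk - xl)) ^ 4 > 0 := by
  have hc : (0:ℝ) < 1 - 2 * γ := by linarith
  set c : ℝ := (1 - 2 * γ) * γ ^ lam3 with hcdef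
  have hc0 : 0 < c := mul_pos hc (pow_pos hγ0 _)
  -- upper bound for the subtracted term
  have hub : ((xi - xj) * (xk - xl)) ^ 4 ≤ (γ ^ (lam3 + 1)) ^ 8 := by
    have h4 : |(xi - xj) * (xk - xl)| ≤ γ ^ lam1 * γ ^ lam2 := by
      rw [abs_mul]
      exact mul_le_mul hij hkl (abs_nonneg _) (le_trans (abs_nonneg _) hij)
    have h5 : γ ^ lam1 * γ ^ lam2 ≤ γ ^ (lam3 + 1) * γ ^ (lam3 + 1) :=
      mul_le_mul (pow_le_pow_of_le_one hγ0.le (by linarith) h1)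
        (pow_le_pow_of_le_one hγ0.le (by linarith) h2)
        (pow_nonneg hγ0.le _) (pow_nonneg hγ0.le _)
    calc ((xi - xj) * (xk - xl)) ^ 4 = |(xi - xj) * (xk - xl)| ^ 4 := (Even.pow_abs (⟨2, rfl⟩ : Even 4) _).symm
      _ ≤ (γ ^ (lam3 + 1) * γ ^ (lam3 + 1)) ^ 4 := by
          exact pow_le_pow_left₀ (abs_nonneg _) (le_trans h4 h5) 4
      _ = (γ ^ (lam3 + 1)) ^ 8 := by ring
  -- lower bound for the main term
  have hlb : c ^ 8 ≤ ((xi - xk) * (xi - xl) * (xj - xk) * (xj - xl)) ^ 2 := by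
    have habs : c ^ 4 ≤ |(xi - xk) * (xi - xl) * (xj - xk) * (xj - xl)| := by
      rw [abs_mul, abs_mul, abs_mul]
      calc c ^ 4 = c * c * c * c := by ring
        _ ≤ |xi - xk| * |xi - xl| * |xj - xk| * |xj - xl| := by
            gcongr <;> first | exact hc0.le | assumption
    calc c ^ 8 = (c ^ 4) ^ 2 := by ring
      _ ≤ |(xi - xk) * (xi - xl) * (xj - xk) * (xj - xl)| ^ 2 :=
          pow_le_pow_left₀ (by positivity) habs 2
      _ = ((xi - xk) * (xi - xl) * (xj - xk) * (xj - xl)) ^ 2 := sq_abs _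
  -- strict comparison of the two bounds
  have hkey : (γ ^ (lam3 + 1)) ^ 8 < c ^ 8 := by
    have hlt : γ ^ (lam3 + 1) < c := by
      rw [hcdef, pow_succ, mul_comm (γ ^ lam3) γ]
      exact mul_lt_mul_of_pos_right (by linarith) (pow_pos hγ0 _)
    exact pow_lt_pow_left₀ hlt (pow_nonneg hγ0.le _) (by norm_num)
  linarith
end

section
/- Let γ be a real number with 0 < γ ≤ 1/16, and let λ₁, λ₂, λ₃ be natural numbers with λ₁ ≥ λ₂ + 1. Let x_i, x_j, x_k, x_l be real numbers such that |x_i − x_j| ≤ γ^{λ₃}, |x_k − x_l| ≤ γ^{λ₁}, each of |x_i − x_k| and |x_i − x_l| is at least (1 − 2γ)·γ^{λ₃}, and each of |x_j − x_k| and |x_j − x_l| is at least (1 − 2γ)·γ^{λ₂}. Then ((x_i − x_k)(x_i − x_l)(x_j − x_k)(x_j − x_l))² − ((x_i − x_j)(x_k − x_l))⁴ > 0. -/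
/-- Case (b) of the quartet-sign polynomial lemma (caterpillar, satisfied quartet):
the detection polynomial is positive. -/
theorem quartet_poly_pos_caterpillar_case
    (γ : ℝ) (hγ0 : 0 < γ) (hγ : γ ≤ 1 / 16)
    (lam1 lam2 lam3 : ℕ) (h1 : lam2 + 1 ≤ lam1)
    (xi xj xk xl : ℝ)
    (hij : |xi - xj| ≤ γ ^ lam3)
    (hkl : |xk - xl| ≤ γ ^ lam1)
    (hik : (1 - 2 * γ) * γ ^ lam3 ≤ |xi - xk|)
    (hil : (1 - 2 * γ) * γ ^ lam3 ≤ |xi - xl|)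
    (hjk : (1 - 2 * γ) * γ ^ lam2 ≤ |xj - xk|)
    (hjl : (1 - 2 * γ) * γ ^ lam2 ≤ |xj - xl|) :
    ((xi - xk) * (xi - xl) * (xj - xk) * (xj - xl)) ^ 2
      - ((xi - xj) * (xk - xl)) ^ 4 > 0 := by
  have hγ1 : γ ≤ 1 := by linarith
  set A := γ ^ lam3 with hAdef
  set B := γ ^ lam2 with hBdef
  have hA : 0 < A := pow_pos hγ0 _
  have hB : 0 < B := pow_pos hγ0 _
  have h2γ : (0:ℝ) < 1 - 2 * γ := by linarith
  -- γ^lam1 ≤ γ * B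
  have hC : γ ^ lam1 ≤ γ * B := by
    calc γ ^ lam1 ≤ γ ^ (lam2 + 1) := pow_le_pow_of_le_one hγ0.le hγ1 h1
    _ = γ * B := by rw [pow_succ]; ring
  set a := |xi - xk|
  set b := |xi - xl|
  set c := |xj - xk|
  set d := |xj - xl|
  set p := |xi - xj|
  set q := |xk - xl|
  have ha : 0 ≤ a := abs_nonneg _
  have hb : 0 ≤ b := abs_nonneg _
  have hc : 0 ≤ c := abs_nonneg _
  have hd : 0 ≤ d := abs_nonneg _
  have hp : 0 ≤ p := abs_nonneg _
  have hq : 0 ≤ q := abs_nonneg _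
  -- rewrite both sides via absolute values
  have e1 : ((xi - xk) * (xi - xl) * (xj - xk) * (xj - xl)) ^ 2
      = (a * b * c * d) ^ 2 := by
    rw [← sq_abs]; rw [abs_mul, abs_mul, abs_mul]
  have e2 : ((xi - xj) * (xk - xl)) ^ 4 = (p * q) ^ 4 := by
    rw [← abs_of_nonneg (a := ((xi - xj) * (xk - xl)) ^ 4) (by positivity),
      ← pow_abs, abs_mul]
  rw [e1, e2, gt_iff_lt, sub_pos]
  -- lower bound for the left product
  have hL : (1 - 2*γ) * A * ((1 - 2*γ) * A) * ((1 - 2*γ) * B) * ((1 - 2*γ) * B)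
      ≤ a * b * c * d := by
    have h1' : 0 ≤ (1 - 2*γ) * A := by positivity
    have h2' : 0 ≤ (1 - 2*γ) * B := by positivity
    gcongr
  -- upper bound for the right product
  have hR : p * q ≤ A * (γ * B) := by
    calc p * q ≤ A * γ ^ lam1 := mul_le_mul hij hkl hq hA.le
    _ ≤ A * (γ * B) := mul_le_mul_of_nonneg_left hC hA.le
  -- key numeric inequality
  have key : γ ^ 4 < (1 - 2*γ) ^ 8 := by
    have h78 : (7/8 : ℝ) ≤ 1 - 2*γ := by linarith
    have h2 : ((7:ℝ)/8) ^ 8 ≤ (1 - 2*γ) ^ 8 := pow_le_pow_left₀ (by norm_num) h78 8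
    have hγ4 : γ ^ 4 ≤ (1/16 : ℝ) ^ 4 := pow_le_pow_left₀ hγ0.le hγ 4
    have hnum : ((1:ℝ)/16) ^ 4 < ((7:ℝ)/8) ^ 8 := by norm_num
    linarith
  calc (p * q) ^ 4 ≤ (A * (γ * B)) ^ 4 := by gcongr
  _ = γ ^ 4 * (A ^ 4 * B ^ 4) := by ring
  _ < (1 - 2*γ) ^ 8 * (A ^ 4 * B ^ 4) := by
      have : 0 < A ^ 4 * B ^ 4 := by positivity
      exact mul_lt_mul_of_pos_right key this
  _ = ((1 - 2*γ) * A * ((1 - 2*γ) * A) * ((1 - 2*γ) * B) * ((1 - 2*γ) * B)) ^ 2 := by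
      ring
  _ ≤ (a * b * c * d) ^ 2 := by gcongr
end

section
/- Let γ be a real number with 0 < γ ≤ 1/16, and let λ₁, λ₂, λ₃ be natural numbers with λ₁ ≥ λ₃ + 1 and λ₂ ≥ λ₃ + 1. Let x_i, x_j, x_k, x_l be real numbers such that |x_i − x_k| ≤ γ^{λ₁}, |x_j − x_l| ≤ γ^{λ₂}, |x_i − x_l| ≤ γ^{λ₃}, |x_j − x_k| ≤ γ^{λ₃}, and each of |x_i − x_j| and |x_k − x_l| is at least (1 − 2γ)·γ^{λ₃}. Then ((x_i − x_k)(x_i − x_l)(x_j − x_k)(x_j − x_l))² − ((x_i − x_j)(x_k − x_l))⁴ < 0. -/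
/-- Case (c) of the quartet-sign polynomial lemma (violated quartet, disjoint
subtrees): the detection polynomial is negative. -/
theorem quartet_poly_neg_disjoint_case
    (γ : ℝ) (hγ0 : 0 < γ) (hγ : γ ≤ 1 / 16)
    (lam1 lam2 lam3 : ℕ) (h1 : lam3 + 1 ≤ lam1) (h2 : lam3 + 1 ≤ lam2)
    (xi xj xk xl : ℝ)
    (hik : |xi - xk| ≤ γ ^ lam1)
    (hjl : |xj - xl| ≤ γ ^ lam2)
    (hil : |xi - xl| ≤ γ ^ lam3)
    (hjk : |xj - xk| ≤ γ ^ lam3)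
    (hij : (1 - 2 * γ) * γ ^ lam3 ≤ |xi - xj|)
    (hkl : (1 - 2 * γ) * γ ^ lam3 ≤ |xk - xl|) :
    ((xi - xk) * (xi - xl) * (xj - xk) * (xj - xl)) ^ 2
      - ((xi - xj) * (xk - xl)) ^ 4 < 0 := by
  have hγ1 : γ ≤ 1 := by linarith
  set t := γ ^ lam3 with htdef
  have htpos : 0 < t := pow_pos hγ0 _
  have h12γ : (0:ℝ) < 1 - 2 * γ := by linarith
  have hik' : |xi - xk| ≤ γ * t := by
    calc |xi - xk| ≤ γ ^ lam1 := hik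
      _ ≤ γ ^ (lam3 + 1) := pow_le_pow_of_le_one hγ0.le hγ1 h1
      _ = γ * t := by rw [htdef]; ring
  have hjl' : |xj - xl| ≤ γ * t := by
    calc |xj - xl| ≤ γ ^ lam2 := hjl
      _ ≤ γ ^ (lam3 + 1) := pow_le_pow_of_le_one hγ0.le hγ1 h2
      _ = γ * t := by rw [htdef]; ring
  have sq_le : ∀ a b : ℝ, |a| ≤ b → a ^ 2 ≤ b ^ 2 := by
    intro a b h
    have := pow_le_pow_left₀ (abs_nonneg a) h 2
    rwa [sq_abs] at this
  have sq_ge : ∀ a b : ℝ, 0 ≤ b → b ≤ |a| → b ^ 2 ≤ a ^ 2 := by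
    intro a b hb h
    have := pow_le_pow_left₀ hb h 2
    rwa [sq_abs] at this
  have e1 : (xi - xk) ^ 2 ≤ (γ * t) ^ 2 := sq_le _ _ hik'
  have e2 : (xi - xl) ^ 2 ≤ t ^ 2 := sq_le _ _ hil
  have e3 : (xj - xk) ^ 2 ≤ t ^ 2 := sq_le _ _ hjk
  have e4 : (xj - xl) ^ 2 ≤ (γ * t) ^ 2 := sq_le _ _ hjl'
  have hcnn : 0 ≤ (1 - 2 * γ) * t := by positivity
  have f1 : ((1 - 2 * γ) * t) ^ 2 ≤ (xi - xj) ^ 2 := sq_ge _ _ hcnn hij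
  have f2 : ((1 - 2 * γ) * t) ^ 2 ≤ (xk - xl) ^ 2 := sq_ge _ _ hcnn hkl
  have key1 : ((xi - xk) * (xi - xl) * (xj - xk) * (xj - xl)) ^ 2
      ≤ γ ^ 4 * t ^ 8 := by
    have h12 : (xi - xk) ^ 2 * (xi - xl) ^ 2 ≤ (γ * t) ^ 2 * t ^ 2 :=
      mul_le_mul e1 e2 (sq_nonneg _) (by positivity)
    have h34 : (xj - xk) ^ 2 * (xj - xl) ^ 2 ≤ t ^ 2 * (γ * t) ^ 2 :=
      mul_le_mul e3 e4 (sq_nonneg _) (by positivity)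
    calc ((xi - xk) * (xi - xl) * (xj - xk) * (xj - xl)) ^ 2
        = ((xi - xk) ^ 2 * (xi - xl) ^ 2) * ((xj - xk) ^ 2 * (xj - xl) ^ 2) := by ring
      _ ≤ ((γ * t) ^ 2 * t ^ 2) * (t ^ 2 * (γ * t) ^ 2) :=
          mul_le_mul h12 h34 (by positivity) (by positivity)
      _ = γ ^ 4 * t ^ 8 := by ring
  have key2 : (1 - 2 * γ) ^ 8 * t ^ 8 ≤ ((xi - xj) * (xk - xl)) ^ 4 := by
    have hf : ((1 - 2 * γ) * t) ^ 2 * ((1 - 2 * γ) * t) ^ 2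
        ≤ (xi - xj) ^ 2 * (xk - xl) ^ 2 :=
      mul_le_mul f1 f2 (sq_nonneg _) (sq_nonneg _)
    have hsq := pow_le_pow_left₀ (by positivity) hf 2
    calc (1 - 2 * γ) ^ 8 * t ^ 8
        = (((1 - 2 * γ) * t) ^ 2 * ((1 - 2 * γ) * t) ^ 2) ^ 2 := by ring
      _ ≤ ((xi - xj) ^ 2 * (xk - xl) ^ 2) ^ 2 := hsq
      _ = ((xi - xj) * (xk - xl)) ^ 4 := by ring
  have key3 : γ ^ 4 < (1 - 2 * γ) ^ 8 := by
    have ha : γ ^ 4 ≤ (1 / 16 : ℝ) ^ 4 := pow_le_pow_left₀ hγ0.le hγ 4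
    have hb : (7 / 8 : ℝ) ^ 8 ≤ (1 - 2 * γ) ^ 8 :=
      pow_le_pow_left₀ (by norm_num) (by linarith) 8
    calc γ ^ 4 ≤ (1 / 16 : ℝ) ^ 4 := ha
      _ < (7 / 8 : ℝ) ^ 8 := by norm_num
      _ ≤ (1 - 2 * γ) ^ 8 := hb
  have : γ ^ 4 * t ^ 8 < (1 - 2 * γ) ^ 8 * t ^ 8 :=
    mul_lt_mul_of_pos_right key3 (by positivity)
  linarith
end

section
/- Let γ be a real number with 0 < γ ≤ 1/16, and let λ₁, λ₂, λ₃ be natural numbers with λ₁ ≥ λ₂ + 1. Let x_i, x_j, x_k, x_l be real numbers such that |x_j − x_l| ≤ γ^{λ₁}, |x_j − x_k| ≤ γ^{λ₂}, |x_i − x_k| ≤ γ^{λ₃}, |x_i − x_l| ≤ γ^{λ₃}, |x_i − x_j| ≥ (1 − 2γ)·γ^{λ₃}, and |x_k − x_l| ≥ (1 − 2γ)·γ^{λ₂}. Then ((x_i − x_k)(x_i − x_l)(x_j − x_k)(x_j − x_l))² − ((x_i − x_j)(x_k − x_l))⁴ < 0. -/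
/-- Case (d) of the quartet-sign polynomial lemma (violated quartet, caterpillar
configuration): the detection polynomial is negative. -/
theorem quartet_poly_neg_caterpillar_case
    (γ : ℝ) (hγ0 : 0 < γ) (hγ : γ ≤ 1 / 16)
    (lam1 lam2 lam3 : ℕ) (h1 : lam2 + 1 ≤ lam1)
    (xi xj xk xl : ℝ)
    (hjl : |xj - xl| ≤ γ ^ lam1)
    (hjk : |xj - xk| ≤ γ ^ lam2)
    (hik : |xi - xk| ≤ γ ^ lam3)
    (hil : |xi - xl| ≤ γ ^ lam3)
    (hij : (1 - 2 * γ) * γ ^ lam3 ≤ |xi - xj|)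
    (hkl : (1 - 2 * γ) * γ ^ lam2 ≤ |xk - xl|) :
    ((xi - xk) * (xi - xl) * (xj - xk) * (xj - xl)) ^ 2
      - ((xi - xj) * (xk - xl)) ^ 4 < 0 := by
  set A := γ ^ lam3 with hA
  set B := γ ^ lam2 with hB
  set C := γ ^ lam1 with hC
  have hApos : 0 < A := pow_pos hγ0 _
  have hBpos : 0 < B := pow_pos hγ0 _
  have hCpos : 0 < C := pow_pos hγ0 _
  have h2γ : 0 < 1 - 2 * γ := by linarith
  have hC_le : C ≤ γ * B := by
    have : γ ^ lam1 ≤ γ ^ (lam2 + 1) :=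
      pow_le_pow_of_le_one (le_of_lt hγ0) (by linarith) h1
    calc C = γ ^ lam1 := rfl
      _ ≤ γ ^ (lam2 + 1) := this
      _ = γ * B := by rw [pow_succ]; ring
  -- bound the first product
  have habs : |(xi - xk) * (xi - xl) * (xj - xk) * (xj - xl)| ≤ A * A * B * C := by
    rw [abs_mul, abs_mul, abs_mul]
    have h0 : (0:ℝ) ≤ |xi - xk| := abs_nonneg _
    have h1' : (0:ℝ) ≤ |xi - xl| := abs_nonneg _
    have h2' : (0:ℝ) ≤ |xj - xk| := abs_nonneg _
    gcongr
  have hP : ((xi - xk) * (xi - xl) * (xj - xk) * (xj - xl)) ^ 2 ≤ (A * A * B * C) ^ 2 := by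
    calc ((xi - xk) * (xi - xl) * (xj - xk) * (xj - xl)) ^ 2
        = |(xi - xk) * (xi - xl) * (xj - xk) * (xj - xl)| ^ 2 := (sq_abs _).symm
      _ ≤ (A * A * B * C) ^ 2 := by
          apply pow_le_pow_left₀ (abs_nonneg _) habs
  have habs2 : ((1 - 2 * γ) * A) * ((1 - 2 * γ) * B) ≤ |(xi - xj) * (xk - xl)| := by
    rw [abs_mul]
    have : 0 ≤ (1 - 2 * γ) * A := by positivity
    exact mul_le_mul hij hkl (by positivity) (abs_nonneg _)
  have hQ : (((1 - 2 * γ) * A) * ((1 - 2 * γ) * B)) ^ 4 ≤ ((xi - xj) * (xk - xl)) ^ 4 := by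
    calc (((1 - 2 * γ) * A) * ((1 - 2 * γ) * B)) ^ 4
        ≤ |(xi - xj) * (xk - xl)| ^ 4 := by
          apply pow_le_pow_left₀ (by positivity) habs2
      _ = ((xi - xj) * (xk - xl)) ^ 4 := by
          rw [← abs_pow, abs_of_nonneg (by positivity)]
  -- key numeric inequality
  have hkey : (A * A * B * C) ^ 2 < (((1 - 2 * γ) * A) * ((1 - 2 * γ) * B)) ^ 4 := by
    have hg8 : γ ^ 2 < (1 - 2 * γ) ^ 8 := by
      have h78 : (7/8 : ℝ) ≤ 1 - 2 * γ := by linarith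
      calc γ ^ 2 ≤ (1/16 : ℝ) ^ 2 := pow_le_pow_left₀ hγ0.le hγ 2
        _ < (7/8 : ℝ) ^ 8 := by norm_num
        _ ≤ (1 - 2 * γ) ^ 8 := pow_le_pow_left₀ (by norm_num) h78 8
    have hC2 : C ^ 2 ≤ γ ^ 2 * B ^ 2 := by
      have h := mul_le_mul hC_le hC_le (le_of_lt hCpos) (by positivity : (0:ℝ) ≤ γ * B)
      calc C ^ 2 = C * C := sq C
        _ ≤ (γ * B) * (γ * B) := h
        _ = γ ^ 2 * B ^ 2 := by ring
    calc (A * A * B * C) ^ 2 = A ^ 4 * B ^ 2 * C ^ 2 := by ring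
      _ ≤ A ^ 4 * B ^ 2 * (γ ^ 2 * B ^ 2) := by
          apply mul_le_mul_of_nonneg_left hC2 (by positivity)
      _ = γ ^ 2 * (A ^ 4 * B ^ 4) := by ring
      _ < (1 - 2 * γ) ^ 8 * (A ^ 4 * B ^ 4) := by
          apply mul_lt_mul_of_pos_right hg8 (by positivity)
      _ = (((1 - 2 * γ) * A) * ((1 - 2 * γ) * B)) ^ 4 := by ring
  linarith
end

section
/- For every real number γ with 0 < γ < 1/2, there exists a function φ from finite binary strings (lists of Booleans) to the real interval [0,1] with the following property: for any two binary strings s and t such that neither is a prefix of the other, letting λ denote the length of their longest common prefix, one has (1 − 2γ)·γ^λ ≤ |φ(s) − φ(t)| ≤ γ^λ. -/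
/-- The length of the longest common prefix of two boolean strings. -/
def lcpLen : List Bool → List Bool → ℕ
  | a :: s, b :: t => if a = b then lcpLen s t + 1 else 0
  | _, _ => 0

/-- The embedding: left child at the left end, right child at the right end. -/
noncomputable def treeEmb (γ : ℝ) : List Bool → ℝ
  | [] => 0
  | b :: s => (if b then 1 - γ else 0) + γ * treeEmb γ s

lemma treeEmb_nonneg (γ : ℝ) (h0 : 0 < γ) (h1 : γ < 1) :
    ∀ s, 0 ≤ treeEmb γ s := by
  intro s
  induction s with
  | nil => simp [treeEmb]
  | cons b s ih =>
    simp only [treeEmb]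
    have : 0 ≤ (if b then 1 - γ else 0) := by
      split <;> linarith
    nlinarith

lemma treeEmb_le_one (γ : ℝ) (h0 : 0 < γ) (h1 : γ < 1) :
    ∀ s, treeEmb γ s ≤ 1 := by
  intro s
  induction s with
  | nil => simp [treeEmb]
  | cons b s ih =>
    simp only [treeEmb]
    have : (if b then (1:ℝ) - γ else 0) ≤ 1 - γ := by
      split <;> linarith
    nlinarith

lemma treeEmb_key (γ : ℝ) (h0 : 0 < γ) (h2 : γ < 1 / 2) :
    ∀ s t : List Bool, ¬ s <+: t → ¬ t <+: s →
      (1 - 2 * γ) * γ ^ lcpLen s t ≤ |treeEmb γ s - treeEmb γ t| ∧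
      |treeEmb γ s - treeEmb γ t| ≤ γ ^ lcpLen s t := by
  have h1 : γ < 1 := by linarith
  intro s
  induction s with
  | nil => intro t hst _; exact absurd (List.nil_prefix) hst
  | cons a s ih =>
    intro t hst hts
    cases t with
    | nil => exact absurd (List.nil_prefix) hts
    | cons b t =>
      by_cases hab : a = b
      · subst hab
        have hst' : ¬ s <+: t := fun h => hst (List.prefix_cons_inj a |>.mpr h)
        have hts' : ¬ t <+: s := fun h => hts (List.prefix_cons_inj a |>.mpr h)
        obtain ⟨hlo, hhi⟩ := ih t hst' hts'
        have hl : lcpLen (a :: s) (a :: t) = lcpLen s t + 1 := by simp [lcpLen]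
        have hd : treeEmb γ (a :: s) - treeEmb γ (a :: t)
            = γ * (treeEmb γ s - treeEmb γ t) := by
          simp only [treeEmb]; ring
        rw [hl, hd, abs_mul, abs_of_pos h0, pow_succ]
        constructor
        · calc (1 - 2*γ) * (γ ^ lcpLen s t * γ)
              = γ * ((1 - 2*γ) * γ ^ lcpLen s t) := by ring
          _ ≤ γ * |treeEmb γ s - treeEmb γ t| := by
              exact mul_le_mul_of_nonneg_left hlo h0.le
        · calc γ * |treeEmb γ s - treeEmb γ t| ≤ γ * γ ^ lcpLen s t :=
              mul_le_mul_of_nonneg_left hhi h0.le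
          _ = γ ^ lcpLen s t * γ := by ring
      · have hl : lcpLen (a :: s) (b :: t) = 0 := by simp [lcpLen, hab]
        rw [hl, pow_zero]
        have hs0 := treeEmb_nonneg γ h0 h1 s
        have hs1 := treeEmb_le_one γ h0 h1 s
        have ht0 := treeEmb_nonneg γ h0 h1 t
        have ht1 := treeEmb_le_one γ h0 h1 t
        rcases Bool.eq_false_or_eq_true a with ha | ha <;>
          rcases Bool.eq_false_or_eq_true b with hb | hb <;>
          subst ha <;> subst hb <;> simp_all [treeEmb]
        · rw [abs_of_nonneg (by nlinarith)]
          constructor <;> nlinarith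
        · rw [abs_of_nonpos (by nlinarith)]
          constructor <;> nlinarith

/-- Tree-to-interval embedding lemma: for every `0 < γ < 1/2` there is a map `φ`
from binary strings (leaf addresses in a rooted binary tree) to `[0,1]` such that
for any two strings, neither of which is a prefix of the other, the distance
`|φ s − φ t|` is between `(1 − 2γ)·γ^λ` and `γ^λ`, where `λ` is the length of
their longest common prefix. -/
theorem exists_tree_embedding (γ : ℝ) (hγ0 : 0 < γ) (hγ : γ < 1 / 2) :
    ∃ φ : List Bool → ℝ,
      (∀ s : List Bool, φ s ∈ Set.Icc (0 : ℝ) 1) ∧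
      ∀ s t : List Bool, ¬ s <+: t → ¬ t <+: s →
        (1 - 2 * γ) * γ ^ lcpLen s t ≤ |φ s - φ t| ∧
        |φ s - φ t| ≤ γ ^ lcpLen s t := by
  have h1 : γ < 1 := by linarith
  exact ⟨treeEmb γ, fun s => ⟨treeEmb_nonneg γ hγ0 h1 s, treeEmb_le_one γ hγ0 h1 s⟩,
    treeEmb_key γ hγ0 hγ⟩
end

section
/- Let T be a finite tree (a connected acyclic graph) with a distinguished root vertex r, and let U be a set of vertices of T containing r. For a vertex v, let φ_U(v) denote the first vertex of U encountered on the unique path from v to r, and for vertices x, y let lca(x, y) denote their lowest common ancestor with respect to the root r (the unique vertex lying on the path from x to r, on the path from y to r, and on the path from x to y). Let a, b, c, d be distinct vertices such that: (i) the unique path P(a,b) from a to b and the unique path P(c,d) from c to d are vertex-disjoint; and (ii) for every choice of distinct x, y, z ∈ {a, b, c, d}, one has φ_U(x) ≠ φ_U(lca(y, z)). Then the path P(φ_U(a), φ_U(b)) and the path P(φ_U(c), φ_U(d)) are vertex-disjoint. -/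
/-- `OnPath G x a b` says that `x` lies on the unique path from `a` to `b`
in the tree `G` (formalized by quantifying over all paths from `a` to `b`). -/
def OnPath {V : Type*} (G : SimpleGraph V) (x a b : V) : Prop :=
  ∀ w : G.Walk a b, w.IsPath → x ∈ w.support

/-- `FirstInSet G r W φ` says that, for every vertex `v`, `φ v` is the first
vertex of `W` encountered on the unique path from `v` to the root `r`:
`φ v ∈ W`, `φ v` lies on the path from `v` to `r`, and `φ v` lies between `v`
and every vertex of `W` that is on the path from `v` to `r`. -/
def FirstInSet {V : Type*} (G : SimpleGraph V) (r : V) (W : Set V) (φ : V → V) : Prop :=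
  ∀ v : V, φ v ∈ W ∧ OnPath G (φ v) v r ∧
    ∀ u ∈ W, OnPath G u v r → OnPath G (φ v) v u

open SimpleGraph Walk

/-- Metric betweenness in a graph. -/
private def MBtw {V : Type*} (G : SimpleGraph V) (x a b : V) : Prop :=
  G.dist a x + G.dist x b = G.dist a b

namespace PhiPreserves

variable {V : Type*} {G : SimpleGraph V}

section Metric

variable (hc : G.Connected)

private lemma mbtw_symm {x a b : V} (h : MBtw G x a b) : MBtw G x b a := by
  have c1 : G.dist a x = G.dist x a := SimpleGraph.dist_comm
  have c2 : G.dist x b = G.dist b x := SimpleGraph.dist_comm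
  have c3 : G.dist a b = G.dist b a := SimpleGraph.dist_comm
  unfold MBtw at *; omega

private lemma mbtw_left {a b : V} : MBtw G a a b := by
  unfold MBtw; simp [SimpleGraph.dist_self]

private lemma mbtw_right {a b : V} : MBtw G b a b := by
  unfold MBtw; simp [SimpleGraph.dist_self]

include hc

private lemma mbtw_self {x a : V} (h : MBtw G x a a) : x = a := by
  unfold MBtw at h
  have c1 : G.dist a x = G.dist x a := SimpleGraph.dist_comm
  have hz : G.dist a a = 0 := SimpleGraph.dist_self
  have : G.dist x a = 0 := by omega
  exact (hc.dist_eq_zero_iff.mp this)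

/-- x between a,b ; y between a,x ⇒ y between a,b -/
private lemma mbtw_trans1 {x y a b : V} (h1 : MBtw G x a b) (h2 : MBtw G y a x) :
    MBtw G y a b := by
  unfold MBtw at *
  have t1 : G.dist y b ≤ G.dist y x + G.dist x b := hc.dist_triangle
  have t2 : G.dist a b ≤ G.dist a y + G.dist y b := hc.dist_triangle
  omega

/-- x between a,b ; y between a,x ⇒ x between y,b -/
private lemma mbtw_trans2 {x y a b : V} (h1 : MBtw G x a b) (h2 : MBtw G y a x) :
    MBtw G x y b := by
  unfold MBtw at *
  have t1 : G.dist y b ≤ G.dist y x + G.dist x b := hc.dist_triangle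
  have t2 : G.dist a b ≤ G.dist a y + G.dist y b := hc.dist_triangle
  omega

/-- x on ray a→r, y on ray x→r ⇒ y on ray a→r -/
private lemma mbtw_ray1 {x y a r : V} (h1 : MBtw G x a r) (h2 : MBtw G y x r) :
    MBtw G y a r :=
  mbtw_symm (mbtw_trans1 hc (mbtw_symm h1) (mbtw_symm h2))

/-- x on ray a→r, y on ray x→r ⇒ x between a,y -/
private lemma mbtw_ray2 {x y a r : V} (h1 : MBtw G x a r) (h2 : MBtw G y x r) :
    MBtw G x a y := by
  unfold MBtw at *
  have t1 : G.dist a y ≤ G.dist a x + G.dist x y := hc.dist_triangle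
  have t2 : G.dist a r ≤ G.dist a y + G.dist y r := hc.dist_triangle
  omega

/-- y between a,x ; x on ray a→r ⇒ x on ray y→r -/
private lemma mbtw_ray3 {x y a r : V} (h1 : MBtw G y a x) (h2 : MBtw G x a r) :
    MBtw G x y r := by
  unfold MBtw at *
  have t1 : G.dist a r ≤ G.dist a y + G.dist y r := hc.dist_triangle
  have t2 : G.dist y r ≤ G.dist y x + G.dist x r := hc.dist_triangle
  omega

/-- x between a,r ; y between a,r ; y between x,r ⇒ x between a,y -/
private lemma mbtw_between {x y a r : V} (h1 : MBtw G x a r) (h2 : MBtw G y a r)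
    (h3 : MBtw G y x r) : MBtw G x a y := by
  unfold MBtw at *
  have t1 : G.dist a y ≤ G.dist a x + G.dist x y := hc.dist_triangle
  omega

/-- v between x,μ ; v between z,μ ; μ between x,z ⇒ v = μ -/
private lemma mbtw_meet_eq {v x z μ : V} (h1 : MBtw G v x μ) (h2 : MBtw G v z μ)
    (h3 : MBtw G μ x z) : v = μ := by
  unfold MBtw at *
  have t1 : G.dist x z ≤ G.dist x v + G.dist v z := hc.dist_triangle
  have t2 : G.dist v z ≤ G.dist v μ + G.dist μ z := hc.dist_triangle
  have c1 : G.dist v z = G.dist z v := SimpleGraph.dist_comm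
  have c2 : G.dist v μ = G.dist μ v := SimpleGraph.dist_comm
  have c3 : G.dist μ z = G.dist z μ := SimpleGraph.dist_comm
  have : G.dist v μ = 0 := by omega
  exact hc.dist_eq_zero_iff.mp (c2 ▸ this)

end Metric

section Bridge

private lemma path_length_eq_dist [DecidableEq V] (hT : G.IsTree) {a b : V}
    (p : G.Walk a b) (hp : p.IsPath) : p.length = G.dist a b := by
  obtain ⟨w, hw⟩ := (hT.isConnected a b).exists_walk_length_eq_dist
  have h1 : w.bypass.IsPath := w.bypass_isPath
  have h2 : p = w.bypass :=
    congrArg Subtype.val (hT.IsAcyclic.path_unique ⟨p, hp⟩ ⟨w.bypass, h1⟩)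
  have h3 : w.bypass.length ≤ G.dist a b := hw ▸ w.length_bypass_le
  have h4 : G.dist a b ≤ w.bypass.length := SimpleGraph.dist_le _
  rw [h2]; omega

private lemma onPath_iff_mbtw [DecidableEq V] (hT : G.IsTree) {x a b : V} :
    OnPath G x a b ↔ MBtw G x a b := by
  obtain ⟨p, hp, hpu⟩ := hT.existsUnique_path a b
  constructor
  · intro hOn
    have hx : x ∈ p.support := hOn p hp
    have h1 : (p.takeUntil x hx).IsPath := hp.takeUntil hx
    have h2 : (p.dropUntil x hx).IsPath := hp.dropUntil hx
    have e1 := path_length_eq_dist hT _ h1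
    have e2 := path_length_eq_dist hT _ h2
    have e3 := path_length_eq_dist hT _ hp
    have hlen : (p.takeUntil x hx).length + (p.dropUntil x hx).length = p.length := by
      conv_rhs => rw [← p.take_spec hx]
      rw [Walk.length_append]
    unfold MBtw; omega
  · intro hB
    obtain ⟨p1, hp1, -⟩ := hT.existsUnique_path a x
    obtain ⟨p2, hp2, -⟩ := hT.existsUnique_path x b
    have e1 := path_length_eq_dist hT _ hp1
    have e2 := path_length_eq_dist hT _ hp2
    have hlen : (p1.append p2).length = G.dist a b := by
      rw [Walk.length_append]; unfold MBtw at hB; omega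
    have hpath : (p1.append p2).IsPath := Walk.isPath_of_length_eq_dist _ hlen
    intro w hw
    have : w = p1.append p2 := (hpu w hw).trans (hpu _ hpath).symm
    rw [this, Walk.mem_support_append_iff]
    exact Or.inl (Walk.end_mem_support p1)

private lemma mem_path_mbtw [DecidableEq V] (hT : G.IsTree) {a b z : V} {p : G.Walk a b}
    (hp : p.IsPath) (hz : z ∈ p.support) : MBtw G z a b := by
  refine (onPath_iff_mbtw hT).mp (fun w hw => ?_)
  obtain ⟨p0, hp0, hpu⟩ := hT.existsUnique_path a b
  rw [hpu w hw, ← hpu p hp]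
  exact hz

private lemma mbtw_split [DecidableEq V] (hT : G.IsTree) {a b m z : V}
    (hm : MBtw G m a b) (hz : MBtw G z a b) : MBtw G z a m ∨ MBtw G z m b := by
  obtain ⟨p, hp, hpu⟩ := hT.existsUnique_path a b
  have hmp : m ∈ p.support := (onPath_iff_mbtw hT).mpr hm p hp
  have hzp : z ∈ p.support := (onPath_iff_mbtw hT).mpr hz p hp
  have hsp := p.take_spec hmp
  rw [← hsp, Walk.mem_support_append_iff] at hzp
  rcases hzp with h | h
  · exact Or.inl (mem_path_mbtw hT (hp.takeUntil hmp) h)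
  · exact Or.inr (mem_path_mbtw hT (hp.dropUntil hmp) h)

end Bridge

section Phi

variable {r : V} {U : Set V} {φ : V → V}

private lemma phi_const (hc : G.Connected)
    (hφB : ∀ v : V, φ v ∈ U ∧ MBtw G (φ v) v r ∧ ∀ u ∈ U, MBtw G u v r → MBtw G (φ v) v u)
    {t m : V} (h : MBtw G t m (φ m)) : φ t = φ m := by
  obtain ⟨hm1, hm2, hm3⟩ := hφB m
  obtain ⟨ht1, ht2, ht3⟩ := hφB t
  have htmr : MBtw G t m r := mbtw_trans1 hc hm2 h
  have hφmtr : MBtw G (φ m) t r := mbtw_trans2 hc hm2 h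
  have h1 : MBtw G (φ t) t (φ m) := ht3 (φ m) hm1 hφmtr
  have hφtmr : MBtw G (φ t) m r := mbtw_ray1 hc htmr ht2
  have h2 : MBtw G (φ m) m (φ t) := hm3 (φ t) ht1 hφtmr
  have e4 : MBtw G t m (φ t) := mbtw_ray2 hc htmr ht2
  unfold MBtw at h h1 h2 e4
  have c1 : G.dist (φ t) (φ m) = G.dist (φ m) (φ t) := SimpleGraph.dist_comm
  have : G.dist (φ t) (φ m) = 0 := by omega
  exact hc.dist_eq_zero_iff.mp this

private lemma phi_above (hc : G.Connected)
    (hφB : ∀ v : V, φ v ∈ U ∧ MBtw G (φ v) v r ∧ ∀ u ∈ U, MBtw G u v r → MBtw G (φ v) v u)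
    {x m : V} (hm : MBtw G m x r) (h : MBtw G (φ x) m r) : φ x = φ m := by
  obtain ⟨hm1, hm2, hm3⟩ := hφB m
  obtain ⟨hx1, hx2, hx3⟩ := hφB x
  have hφmxr : MBtw G (φ m) x r := mbtw_ray1 hc hm hm2
  have h1 : MBtw G (φ x) x (φ m) := hx3 (φ m) hm1 hφmxr
  have h2 : MBtw G (φ m) m (φ x) := hm3 (φ x) hx1 h
  have e : MBtw G m x (φ x) := mbtw_ray2 hc hm h
  have e' : MBtw G m x (φ m) := mbtw_ray2 hc hm hm2
  unfold MBtw at h1 h2 e e'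
  have c1 : G.dist (φ x) (φ m) = G.dist (φ m) (φ x) := SimpleGraph.dist_comm
  have : G.dist (φ x) (φ m) = 0 := by omega
  exact hc.dist_eq_zero_iff.mp this

/-- Structure of the path `P(φ a, φ b)`: any point on it is either on `P(a,b)`,
or on `P(α, φ α)` where `α = lca a b`, the latter only when `φ a = φ α` or `φ b = φ α`. -/
private lemma lemS [DecidableEq V] (hT : G.IsTree)
    (hφB : ∀ v : V, φ v ∈ U ∧ MBtw G (φ v) v r ∧ ∀ u ∈ U, MBtw G u v r → MBtw G (φ v) v u)
    {a b α v : V}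
    (hα1 : MBtw G α a r) (hα2 : MBtw G α b r) (hα3 : MBtw G α a b)
    (hv : MBtw G v (φ a) (φ b)) :
    MBtw G v a b ∨ (MBtw G v α (φ α) ∧ (φ a = φ α ∨ φ b = φ α)) := by
  have hc := hT.isConnected
  obtain ⟨ha1, ha2, ha3⟩ := hφB a
  obtain ⟨hb1, hb2, hb3⟩ := hφB b
  obtain ⟨hα1', hα2', hα3'⟩ := hφB α
  have insideL : ∀ x y w : V, MBtw G α x y → MBtw G w x α → MBtw G v w α → MBtw G v x y := by
    intro x y w h1 h2 h3
    have hvxα : MBtw G v x α := mbtw_symm (mbtw_trans1 hc (mbtw_symm h2) (mbtw_symm h3))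
    exact mbtw_trans1 hc h1 hvxα
  rcases mbtw_split hT hα1 ha2 with ha' | ha' <;>
    rcases mbtw_split hT hα2 hb2 with hb' | hb'
  · -- both φa, φb inside P(a,b)
    have hαφab : MBtw G α (φ a) b := mbtw_trans2 hc hα3 ha'
    have key : MBtw G α (φ a) (φ b) := by
      unfold MBtw at hαφab hb' ⊢
      have t1 : G.dist (φ a) b ≤ G.dist (φ a) (φ b) + G.dist (φ b) b := hc.dist_triangle
      have t2 : G.dist (φ a) (φ b) ≤ G.dist (φ a) α + G.dist α (φ b) := hc.dist_triangle
      have c1 : G.dist b (φ b) = G.dist (φ b) b := SimpleGraph.dist_comm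
      have c2 : G.dist (φ b) α = G.dist α (φ b) := SimpleGraph.dist_comm
      have c3 : G.dist b α = G.dist α b := SimpleGraph.dist_comm
      omega
    rcases mbtw_split hT key hv with h | h
    · exact Or.inl (insideL a b (φ a) hα3 ha' h)
    · exact Or.inl (mbtw_symm
        (insideL b a (φ b) (mbtw_symm hα3) hb' (mbtw_symm h)))
  · -- φ b beyond α
    have hbeq : φ b = φ α := phi_above hc hφB hα2 hb'
    have hαφar : MBtw G α (φ a) r := mbtw_ray3 hc ha' hα1
    have key : MBtw G α (φ a) (φ α) := mbtw_ray2 hc hαφar hα2'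
    have hv' : MBtw G v (φ a) (φ α) := by rw [← hbeq]; exact hv
    rcases mbtw_split hT key hv' with h | h
    · exact Or.inl (insideL a b (φ a) hα3 ha' h)
    · exact Or.inr ⟨h, Or.inr hbeq⟩
  · -- φ a beyond α
    have haeq : φ a = φ α := phi_above hc hφB hα1 ha'
    have hαφbr : MBtw G α (φ b) r := mbtw_ray3 hc hb' hα2
    have key : MBtw G α (φ b) (φ α) := mbtw_ray2 hc hαφbr hα2'
    have hv' : MBtw G v (φ b) (φ α) := by rw [← haeq]; exact mbtw_symm hv
    rcases mbtw_split hT key hv' with h | h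
    · exact Or.inl (mbtw_symm (insideL b a (φ b) (mbtw_symm hα3) hb' h))
    · exact Or.inr ⟨h, Or.inl haeq⟩
  · -- both beyond α
    have haeq : φ a = φ α := phi_above hc hφB hα1 ha'
    have hbeq : φ b = φ α := phi_above hc hφB hα2 hb'
    have hv' : MBtw G v (φ α) (φ α) := by
      have := hv; rw [haeq, hbeq] at this; exact this
    have hvα : v = φ α := mbtw_self hc hv'
    refine Or.inr ⟨?_, Or.inl haeq⟩
    rw [hvα]; exact mbtw_right

/-- The main contradiction helper. -/
private lemma helperH [DecidableEq V] (hT : G.IsTree)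
    (hφB : ∀ v : V, φ v ∈ U ∧ MBtw G (φ v) v r ∧ ∀ u ∈ U, MBtw G u v r → MBtw G (φ v) v u)
    {x y z w γ' v μ : V}
    (hdisj' : ∀ t, MBtw G t x y → MBtw G t z w → False)
    (hvx : MBtw G v x r) (hvxy : MBtw G v x y)
    (hγz : MBtw G γ' z r) (hγzw : MBtw G γ' z w)
    (hvγ : MBtw G v γ' (φ γ'))
    (hμ1 : MBtw G μ x r) (hμ2 : MBtw G μ z r) (hμ3 : MBtw G μ x z)
    (hwμ : φ w ≠ φ μ) (hwγ : φ w = φ γ') : False := by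
  have hc := hT.isConnected
  have hφγ2 : MBtw G (φ γ') γ' r := (hφB γ').2.1
  have hvγr : MBtw G v γ' r := mbtw_trans1 hc hφγ2 hvγ
  have hvz : MBtw G v z r := mbtw_ray1 hc hγz hvγr
  have hvμr : MBtw G v μ r := by
    rcases mbtw_split hT hμ1 hvx with h1 | h1
    · rcases mbtw_split hT hμ2 hvz with h2 | h2
      · have := mbtw_meet_eq hc h1 h2 hμ3
        rw [this]; exact mbtw_left
      · exact h2
    · exact h1
  rcases mbtw_split hT hγz hμ2 with h | h
  · have hμzw : MBtw G μ z w := mbtw_trans1 hc hγzw h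
    have hμxv : MBtw G μ x v := mbtw_between hc hμ1 hvx hvμr
    have hμxy : MBtw G μ x y := mbtw_trans1 hc hvxy hμxv
    exact hdisj' μ hμxy hμzw
  · have hμγv : MBtw G μ γ' v := mbtw_between hc h hvγr hvμr
    have hμγφ : MBtw G μ γ' (φ γ') := mbtw_trans1 hc hvγ hμγv
    exact hwμ (hwγ.trans (phi_const hc hφB hμγφ).symm)

end Phi

end PhiPreserves

open PhiPreserves in
/-- Lemma B.1: in a finite rooted tree, the map `φ_U` sending each vertex to the
first vertex of `U` on its root path preserves vertex-disjointness of the paths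
`P(a,b)` and `P(c,d)` for distinct `a,b,c,d`, under the non-degeneracy condition
`φ_U(x) ≠ φ_U(lca(y,z))` for all distinct triples `x,y,z ∈ {a,b,c,d}`. -/
theorem phi_preserves_disjoint_paths
    {V : Type*} [Fintype V] (G : SimpleGraph V) (hT : G.IsTree)
    (r : V) (U : Set V) (hrU : r ∈ U)
    (φ : V → V) (hφ : FirstInSet G r U φ)
    (lca : V → V → V)
    (hlca : ∀ x y : V,
      OnPath G (lca x y) x r ∧ OnPath G (lca x y) y r ∧ OnPath G (lca x y) x y)
    (a b c d : V)
    (hab : a ≠ b) (hac : a ≠ c) (had : a ≠ d)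
    (hbc : b ≠ c) (hbd : b ≠ d) (hcd : c ≠ d)
    (hdisj : ∀ (p : G.Walk a b), p.IsPath → ∀ (q : G.Walk c d), q.IsPath →
      ∀ x : V, x ∈ p.support → x ∉ q.support)
    (hnd : ∀ x y z : V, x ∈ ({a, b, c, d} : Set V) → y ∈ ({a, b, c, d} : Set V) →
      z ∈ ({a, b, c, d} : Set V) → x ≠ y → x ≠ z → y ≠ z →
      φ x ≠ φ (lca y z)) :
    ∀ (p : G.Walk (φ a) (φ b)), p.IsPath → ∀ (q : G.Walk (φ c) (φ d)), q.IsPath →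
      ∀ x : V, x ∈ p.support → x ∉ q.support := by
  classical
  have hc := hT.isConnected
  have hOP : ∀ x a b : V, OnPath G x a b ↔ MBtw G x a b := fun x a b => onPath_iff_mbtw hT
  have hφB : ∀ v : V, φ v ∈ U ∧ MBtw G (φ v) v r ∧
      ∀ u ∈ U, MBtw G u v r → MBtw G (φ v) v u := by
    intro v
    obtain ⟨h1, h2, h3⟩ := hφ v
    exact ⟨h1, (hOP _ _ _).mp h2, fun u hu hb => (hOP _ _ _).mp (h3 u hu ((hOP _ _ _).mpr hb))⟩
  have hlcaB : ∀ x y : V, MBtw G (lca x y) x r ∧ MBtw G (lca x y) y r ∧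
      MBtw G (lca x y) x y := by
    intro x y
    obtain ⟨h1, h2, h3⟩ := hlca x y
    exact ⟨(hOP _ _ _).mp h1, (hOP _ _ _).mp h2, (hOP _ _ _).mp h3⟩
  have hdisjB : ∀ t : V, MBtw G t a b → MBtw G t c d → False := by
    intro t h1 h2
    obtain ⟨p, hp, -⟩ := hT.existsUnique_path a b
    obtain ⟨q, hq, -⟩ := hT.existsUnique_path c d
    exact hdisj p hp q hq t ((hOP _ _ _).mpr h1 p hp) ((hOP _ _ _).mpr h2 q hq)
  intro p hp q hq x hxp hxq
  have hx1 : MBtw G x (φ a) (φ b) := mem_path_mbtw hT hp hxp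
  have hx2 : MBtw G x (φ c) (φ d) := mem_path_mbtw hT hq hxq
  obtain ⟨hα1, hα2, hα3⟩ := hlcaB a b
  obtain ⟨hγ1, hγ2, hγ3⟩ := hlcaB c d
  have ma : a ∈ ({a, b, c, d} : Set V) := by simp
  have mb : b ∈ ({a, b, c, d} : Set V) := by simp
  have mc : c ∈ ({a, b, c, d} : Set V) := by simp
  have md : d ∈ ({a, b, c, d} : Set V) := by simp
  rcases lemS hT hφB hα1 hα2 hα3 hx1 with h1 | ⟨h1, hext1⟩ <;>
    rcases lemS hT hφB hγ1 hγ2 hγ3 hx2 with h2 | ⟨h2, hext2⟩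
  · exact hdisjB x h1 h2
  · -- x ∈ P(a,b) and x ∈ P(γ, φ γ)
    rcases mbtw_split hT hα3 h1 with hxa | hxb
    · have hvx : MBtw G x a r := mbtw_trans1 hc hα1 hxa
      rcases hext2 with he | he
      · -- φ c = φ γ : use z := d, w := c, μ := lca a d
        obtain ⟨hμ1, hμ2, hμ3⟩ := hlcaB a d
        exact helperH hT hφB (fun t u1 u2 => hdisjB t u1 (mbtw_symm u2))
          hvx h1 hγ2 (mbtw_symm hγ3) h2 hμ1 hμ2 hμ3
          (hnd c a d mc ma md hac.symm hcd had) he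
      · -- φ d = φ γ : use z := c, w := d, μ := lca a c
        obtain ⟨hμ1, hμ2, hμ3⟩ := hlcaB a c
        exact helperH hT hφB hdisjB
          hvx h1 hγ1 hγ3 h2 hμ1 hμ2 hμ3
          (hnd d a c md ma mc had.symm hcd.symm hac) he
    · have hvx : MBtw G x b r := mbtw_trans1 hc hα2 (mbtw_symm hxb)
      have hvxy : MBtw G x b a := mbtw_symm h1
      rcases hext2 with he | he
      · obtain ⟨hμ1, hμ2, hμ3⟩ := hlcaB b d
        exact helperH hT hφB (fun t u1 u2 => hdisjB t (mbtw_symm u1) (mbtw_symm u2))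
          hvx hvxy hγ2 (mbtw_symm hγ3) h2 hμ1 hμ2 hμ3
          (hnd c b d mc mb md hbc.symm hcd hbd) he
      · obtain ⟨hμ1, hμ2, hμ3⟩ := hlcaB b c
        exact helperH hT hφB (fun t u1 u2 => hdisjB t (mbtw_symm u1) u2)
          hvx hvxy hγ1 hγ3 h2 hμ1 hμ2 hμ3
          (hnd d b c md mb mc hbd.symm hcd.symm hbc) he
  · -- x ∈ P(c,d) and x ∈ P(α, φ α)
    rcases mbtw_split hT hγ3 h2 with hxc | hxd
    · have hvx : MBtw G x c r := mbtw_trans1 hc hγ1 hxc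
      rcases hext1 with he | he
      · -- φ a = φ α : z := b, w := a, μ := lca c b
        obtain ⟨hμ1, hμ2, hμ3⟩ := hlcaB c b
        exact helperH hT hφB (fun t u1 u2 => hdisjB t (mbtw_symm u2) u1)
          hvx h2 hα2 (mbtw_symm hα3) h1 hμ1 hμ2 hμ3
          (hnd a c b ma mc mb hac hab hbc.symm) he
      · -- φ b = φ α : z := a, w := b, μ := lca c a
        obtain ⟨hμ1, hμ2, hμ3⟩ := hlcaB c a
        exact helperH hT hφB (fun t u1 u2 => hdisjB t u2 u1)
          hvx h2 hα1 hα3 h1 hμ1 hμ2 hμ3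
          (hnd b c a mb mc ma hbc hab.symm hac.symm) he
    · have hvx : MBtw G x d r := mbtw_trans1 hc hγ2 (mbtw_symm hxd)
      have hvxy : MBtw G x d c := mbtw_symm h2
      rcases hext1 with he | he
      · obtain ⟨hμ1, hμ2, hμ3⟩ := hlcaB d b
        exact helperH hT hφB (fun t u1 u2 => hdisjB t (mbtw_symm u2) (mbtw_symm u1))
          hvx hvxy hα2 (mbtw_symm hα3) h1 hμ1 hμ2 hμ3
          (hnd a d b ma md mb had hab hbd.symm) he
      · obtain ⟨hμ1, hμ2, hμ3⟩ := hlcaB d a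
        exact helperH hT hφB (fun t u1 u2 => hdisjB t u2 (mbtw_symm u1))
          hvx hvxy hα1 hα3 h1 hμ1 hμ2 hμ3
          (hnd b d a mb md ma hbd hab.symm had.symm) he
  · -- x ∈ P(α, φ α) and x ∈ P(γ, φ γ)
    have hxa : φ x = φ (lca a b) := phi_const hc hφB h1
    have hxg : φ x = φ (lca c d) := phi_const hc hφB h2
    have hag : φ (lca a b) = φ (lca c d) := hxa.symm.trans hxg
    rcases hext2 with he | he
    · exact hnd c a b mc ma mb hac.symm hbc.symm hab (he.trans hag.symm)
    · exact hnd d a b md ma mb had.symm hbd.symm hab (he.trans hag.symm)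
end
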